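/- arXiv:1704.02676 — 4 statements merged into one kernel-verified Lean document; each statement's English description precedes it below -/
import Mathlib

section
/- If A is an n×n real Metzler matrix (off-diagonal entries nonnegative) that is Hurwitz (all eigenvalues have negative real part), then there exists a vector p with all entries strictly positive such that Aᵀp has all entries strictly negative. -/
/-!
Write `M = Aᵀ`, again Metzler, and with no eigenvalue in `[0, ∞)`, so the resolvent
`t ↦ (t • 1 - M)⁻¹` is defined and continuous on `[0, ∞)`. It is entrywise nonnegative for large
`t`: with `B = M + c • 1 ≥ 0` and `r = t + c > ‖B‖`, it equals `r⁻¹ (1 - r⁻¹ B)⁻¹`, a Neumann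
series of nonnegative matrices. Nonnegativity also propagates downwards, because
`(x - ε) • 1 - M = (x • 1 - M) (1 - ε (x • 1 - M)⁻¹)` is again inverted by a nonnegative Neumann
series when `ε` is small. Being a closed condition, it therefore holds down to `t = 0`, i.e.
`(-M)⁻¹ ≥ 0`. Then `p = (-M)⁻¹ 1` satisfies `M p = -1`, and `p > 0` because an invertible matrix
has no zero row.
-/

open Matrix Set

namespace Matrix

theorem isClosed_setOf_nonneg {m n : Type*} :
    IsClosed {X : Matrix m n ℝ | ∀ i j, 0 ≤ X i j} := by
  simp only [ofPred_forall]
  exact isClosed_iInter fun i ↦ isClosed_iInter fun j ↦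
    isClosed_le continuous_const ((continuous_apply j).comp (continuous_apply i))

variable {ι : Type*} [Fintype ι] [DecidableEq ι]

theorem spectrum_transpose {K : Type*} [Field K] (M : Matrix ι ι K) :
    spectrum K Mᵀ = spectrum K M := by
  ext s
  rw [mem_spectrum_iff_isRoot_charpoly, mem_spectrum_iff_isRoot_charpoly, charpoly_transpose]

theorem algebraMap_mem_spectrum_map {K L : Type*} [Field K] [Field L] [Algebra K L]
    {M : Matrix ι ι K} {s : K} (h : s ∈ spectrum K M) :
    algebraMap K L s ∈ spectrum L (M.map (algebraMap K L)) := by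
  rw [mem_spectrum_iff_isRoot_charpoly] at h ⊢
  rw [charpoly_map]
  exact h.map

theorem continuousAt_inv_smul_one_sub {M : Matrix ι ι ℝ} {s : ℝ} (h : (s • 1 - M).det ≠ 0) :
    ContinuousAt (fun t : ℝ ↦ (t • 1 - M)⁻¹) s :=
  (continuousAt_matrix_inv _ (by rw [Ring.inverse_eq_inv']; exact continuousAt_inv₀ h)).comp
    ((continuous_id.smul continuous_const).sub continuous_const).continuousAt

theorem mulVec_one_pos_of_nonneg {R : Matrix ι ι ℝ} (hR : ∀ i j, 0 ≤ R i j) (hunit : IsUnit R)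
    (i : ι) : 0 < (R *ᵥ 1) i := by
  obtain ⟨j, hj⟩ : ∃ j, R i j ≠ 0 := by
    by_contra! hrow
    have := congr_fun (congr_fun (mul_nonsing_inv R ((isUnit_iff_isUnit_det R).mp hunit)) i) i
    simp [mul_apply, hrow] at this
  simp only [mulVec, dotProduct, Pi.one_apply, mul_one]
  exact Finset.sum_pos' (fun j _ ↦ hR i j) ⟨j, Finset.mem_univ j, (hR i j).lt_of_ne' hj⟩

attribute [local instance] Matrix.linftyOpNormedRing Matrix.linftyOpNormedAlgebra

theorem inv_one_sub_nonneg {C : Matrix ι ι ℝ} (hC : ∀ i j, 0 ≤ C i j) (h : ‖C‖ < 1)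
    (i j : ι) : 0 ≤ (1 - C)⁻¹ i j := by
  rw [nonsing_inv_eq_ringInverse]
  exact (Pi.hasSum.mp (Pi.hasSum.mp (hasSum_geom_series_inverse C h) i) j).nonneg
    fun k ↦ pow_apply_nonneg hC k i j

theorem inv_sub_smul_one_nonneg {X : Matrix ι ι ℝ} (hX : IsUnit X)
    (hXinv : ∀ i j, 0 ≤ X⁻¹ i j) {ε : ℝ} (hε : 0 ≤ ε) (hsmall : ε * ‖X⁻¹‖ < 1) (i j : ι) :
    0 ≤ (X - ε • 1)⁻¹ i j := by
  have hfactor : X - ε • 1 = X * (1 - ε • X⁻¹) := by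
    rw [mul_sub, mul_one, Matrix.mul_smul, mul_nonsing_inv _ ((isUnit_iff_isUnit_det X).mp hX)]
  have hsmall' : ‖ε • X⁻¹‖ < 1 := by rwa [norm_smul, Real.norm_of_nonneg hε]
  rw [hfactor, mul_inv_rev, mul_apply]
  exact Finset.sum_nonneg fun k _ ↦ mul_nonneg
    (inv_one_sub_nonneg (fun i j ↦ mul_nonneg hε (hXinv i j)) hsmall' i k) (hXinv k j)

theorem exists_inv_smul_one_sub_nonneg {M : Matrix ι ι ℝ} (hM : ∀ i j, i ≠ j → 0 ≤ M i j) :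
    ∃ t : ℝ, 0 ≤ t ∧ ∀ i j, 0 ≤ (t • 1 - M)⁻¹ i j := by
  obtain ⟨c, hc, hdiag⟩ : ∃ c : ℝ, 0 ≤ c ∧ ∀ i, 0 ≤ M i i + c :=
    ⟨∑ i, |M i i|, by positivity, fun i ↦ by
      have := Finset.single_le_sum (fun j _ ↦ abs_nonneg (M j j)) (Finset.mem_univ i)
      linarith [neg_abs_le (M i i)]⟩
  set B := M + c • 1
  have hB : ∀ i j, 0 ≤ B i j := by
    intro i j
    rcases eq_or_ne i j with rfl | hij
    · simpa [B] using hdiag i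
    · simpa [B, one_apply_ne hij] using hM i j hij
  set r := ‖B‖ + 1 + c
  have hr : 0 < r := by positivity
  refine ⟨‖B‖ + 1, by positivity, fun i j ↦ ?_⟩
  have hfactor : (‖B‖ + 1) • (1 : Matrix ι ι ℝ) - M = (r • 1) * (1 - r⁻¹ • B) := by
    rw [mul_sub, mul_one, smul_mul, one_mul, smul_smul, mul_inv_cancel₀ hr.ne', one_smul]
    simp only [r, B]
    module
  have hsmall : ‖r⁻¹ • B‖ < 1 := by
    rw [norm_smul, Real.norm_of_nonneg (inv_nonneg.mpr hr.le), inv_mul_lt_one₀ hr]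
    simp only [r]
    linarith
  have hscalar : (r • (1 : Matrix ι ι ℝ))⁻¹ = r⁻¹ • 1 :=
    inv_eq_left_inv (by rw [smul_mul_smul, one_mul, inv_mul_cancel₀ hr.ne', one_smul])
  rw [hfactor, mul_inv_rev, hscalar, Matrix.mul_smul, mul_one, smul_apply, smul_eq_mul]
  exact mul_nonneg (inv_nonneg.mpr hr.le) (inv_one_sub_nonneg
    (fun i j ↦ mul_nonneg (inv_nonneg.mpr hr.le) (hB i j)) hsmall i j)

theorem inv_neg_nonneg_of_metzler {M : Matrix ι ι ℝ} (hM : ∀ i j, i ≠ j → 0 ≤ M i j)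
    (hspec : ∀ s : ℝ, 0 ≤ s → s ∉ spectrum ℝ M) (i j : ι) : 0 ≤ (-M)⁻¹ i j := by
  have hunit : ∀ s : ℝ, 0 ≤ s → IsUnit (s • 1 - M) := fun s hs ↦ by
    simpa [Algebra.algebraMap_eq_smul_one] using spectrum.notMem_iff.mp (hspec s hs)
  set S := {t : ℝ | ∀ i j, 0 ≤ (t • 1 - M)⁻¹ i j}
  obtain ⟨t₀, ht₀, ht₀S⟩ := exists_inv_smul_one_sub_nonneg hM
  have hclosed : IsClosed (S ∩ Icc 0 t₀) := by
    have hcont : ContinuousOn (fun t : ℝ ↦ (t • 1 - M)⁻¹) (Icc 0 t₀) := fun t ht ↦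
      (continuousAt_inv_smul_one_sub
        ((isUnit_iff_isUnit_det _).mp (hunit t ht.1)).ne_zero).continuousWithinAt
    rw [inter_comm]
    exact hcont.preimage_isClosed_of_isClosed isClosed_Icc isClosed_setOf_nonneg
  have hstep : ∀ x ∈ S ∩ Ioc 0 t₀, (S ∩ Ico 0 x).Nonempty := by
    rintro x ⟨hxS, hx, -⟩
    obtain ⟨δ, hδ, hδN⟩ := exists_pos_mul_lt one_pos ‖(x • (1 : Matrix ι ι ℝ) - M)⁻¹‖
    set ε := min δ x
    have hε : 0 < ε := lt_min hδ hx
    have hεN : ε * ‖(x • (1 : Matrix ι ι ℝ) - M)⁻¹‖ < 1 := by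
      rw [mul_comm]
      exact (mul_le_mul_of_nonneg_left (min_le_left δ x) (norm_nonneg _)).trans_lt hδN
    refine ⟨x - ε, fun i j ↦ ?_, sub_nonneg.mpr (min_le_right δ x), sub_lt_self x hε⟩
    have := inv_sub_smul_one_nonneg (hunit x hx.le) hxS hε.le hεN i j
    rwa [sub_right_comm, ← sub_smul] at this
  simpa using hclosed.mem_of_ge_of_forall_exists_lt ht₀S ht₀ hstep i j

end Matrix

theorem stmt_0 (n : ℕ) (A : Matrix (Fin n) (Fin n) ℝ)
    (hMetzler : ∀ i j, i ≠ j → 0 ≤ A i j)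
    (hHurwitz : ∀ μ ∈ spectrum ℂ (A.map (algebraMap ℝ ℂ)), μ.re < 0) :
    ∃ p : Fin n → ℝ, (∀ i, 0 < p i) ∧ ∀ i, (Aᵀ.mulVec p) i < 0 := by
  have hspec : ∀ s : ℝ, 0 ≤ s → s ∉ spectrum ℝ Aᵀ := fun s hs hmem ↦ by
    rw [spectrum_transpose] at hmem
    have := hHurwitz _ (algebraMap_mem_spectrum_map (L := ℂ) hmem)
    simp only [Complex.coe_algebraMap, Complex.ofReal_re] at this
    linarith
  have hunit : IsUnit (-Aᵀ) := by
    simpa using spectrum.notMem_iff.mp (hspec 0 le_rfl)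
  have hAp : Aᵀ *ᵥ ((-Aᵀ)⁻¹ *ᵥ 1) = -1 := by
    have h := mul_nonsing_inv _ ((isUnit_iff_isUnit_det _).mp hunit)
    rw [neg_mul, neg_eq_iff_eq_neg] at h
    rw [mulVec_mulVec, h, neg_mulVec, one_mulVec]
  refine ⟨(-Aᵀ)⁻¹ *ᵥ 1, mulVec_one_pos_of_nonneg
    (inv_neg_nonneg_of_metzler (fun i j hij ↦ hMetzler j i hij.symm) hspec)
    (isUnit_nonsing_inv_iff.mpr hunit), fun i ↦ ?_⟩
  simp [hAp]
end

section
/- Under the same hypotheses (H Metzler Hurwitz N×N, V_i ≥ 0 differentiable with V_i' ≤ Σ_j α_{ij}V_j), if q ∈ ℝᴺ has q > 0 entrywise and Hq ≤ -εq entrywise with ε > 0, then W(t) := max_i V_i(t)/q_i satisfies W(t) ≤ e^{-εt} W(0) for all t ≥ 0. -/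
/-! A comparison (fencing) argument applied to the family `V i / q i` directly, without
differentiating the maximum: against the barrier `B t = δ + e^{-εt} W(0)`, at a contact point
`V i / q i = B` every `V j / q j` lies below `B`, so the Metzler sign pattern gives
`(V i / q i)' ≤ (H q)_i B / q i ≤ -ε B < B'`; hence no component crosses `B`, and `δ → 0`. -/

open Set Filter Topology Matrix

theorem HasDerivWithinAt.eventually_lt_of_deriv_lt {f B : ℝ → ℝ} {f' B' x : ℝ}
    (hf : HasDerivWithinAt f f' (Ici x) x) (hB : HasDerivWithinAt B B' (Ici x) x)
    (hx : f x = B x) (hlt : f' < B') : ∀ᶠ z in 𝓝[>] x, f z < B z := by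
  have hslope := (hasDerivWithinAt_iff_tendsto_slope' (lt_irrefl x)).1 (hf.sub hB).Ioi_of_Ici
  filter_upwards [hslope (Iio_mem_nhds (sub_neg.2 hlt)), self_mem_nhdsWithin] with z hz hxz
  have hz : (f z - B z) / (z - x) < 0 := by simpa [slope_def_field, hx] using hz
  exact sub_neg.1 <| by simpa using (div_lt_iff₀ (sub_pos.2 hxz)).1 hz

theorem forall_image_le_of_deriv_right_lt_deriv_boundary {ι : Type*} [Finite ι]
    {f f' : ι → ℝ → ℝ} {a b : ℝ} (hf : ∀ i, ContinuousOn (f i) (Icc a b))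
    (hf' : ∀ i, ∀ x ∈ Ico a b, HasDerivWithinAt (f i) (f' i x) (Ici x) x)
    {B B' : ℝ → ℝ} (ha : ∀ i, f i a ≤ B a) (hB : ContinuousOn B (Icc a b))
    (hB' : ∀ x ∈ Ico a b, HasDerivWithinAt B (B' x) (Ici x) x)
    (bound : ∀ x ∈ Ico a b, (∀ j, f j x ≤ B x) → ∀ i, f i x = B x → f' i x < B' x) :
    ∀ ⦃x⦄, x ∈ Icc a b → ∀ i, f i x ≤ B x := by
  set s := {x | (fun i ↦ f i x) ≤ fun _ ↦ B x}
  have hs : IsClosed (s ∩ Icc a b) := by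
    rw [inter_comm]
    exact (continuousOn_pi.2 hf).prodMk (continuousOn_pi.2 fun _ ↦ hB)
      |>.preimage_isClosed_of_isClosed isClosed_Icc OrderClosedTopology.isClosed_le'
  refine fun x hx ↦ hs.Icc_subset_of_forall_mem_nhdsWithin ha (fun x ⟨hxs, hxab⟩ ↦ ?_) hx
  refine Filter.eventually_all.2 fun i ↦ ?_
  rcases (hxs i).lt_or_eq with hlt | heq
  · have hcont := ((hf' i x hxab).continuousWithinAt.sub (hB' x hxab).continuousWithinAt).mono
      Ioi_subset_Ici_self
    exact (hcont.eventually_lt continuousWithinAt_const (sub_neg.2 hlt)).mono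
      fun z hz ↦ (sub_neg.1 hz).le
  · exact ((hf' i x hxab).eventually_lt_of_deriv_lt (hB' x hxab) heq
      (bound x hxab hxs i heq)).mono fun z hz ↦ hz.le

theorem Matrix.mulVec_apply_le_mul_mulVec_apply {ι R : Type*} [Fintype ι] [CommRing R]
    [PartialOrder R] [IsOrderedRing R] {A : Matrix ι ι R} (hA : ∀ i j, i ≠ j → 0 ≤ A i j)
    {v q : ι → R} {c : R} {i : ι} (hv : ∀ j, v j ≤ c * q j) (hi : v i = c * q i) :
    (A *ᵥ v) i ≤ c * (A *ᵥ q) i := by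
  simp only [mulVec, dotProduct, Finset.mul_sum]
  refine Finset.sum_le_sum fun j _ ↦ ?_
  rw [mul_left_comm]
  obtain rfl | hij := eq_or_ne i j
  · rw [hi]
  · exact mul_le_mul_of_nonneg_left (hv j) (hA i j hij)

theorem div_le_exp_mul_of_metzler_comparison {ι : Type*} [Fintype ι] {H : Matrix ι ι ℝ}
    (hH : ∀ i j, i ≠ j → 0 ≤ H i j) {q : ι → ℝ} (hq : ∀ i, 0 < q i) {ε : ℝ} (hε : 0 < ε)
    (hHq : ∀ i, (H *ᵥ q) i ≤ -ε * q i) {V V' : ι → ℝ → ℝ}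
    (hV : ∀ i t, 0 ≤ t → HasDerivAt (V i) (V' i t) t)
    (hV' : ∀ i t, 0 ≤ t → V' i t ≤ ∑ j, H i j * V j t) {c : ℝ} (hc : 0 ≤ c)
    (hV₀ : ∀ i, V i 0 / q i ≤ c) :
    ∀ t, 0 ≤ t → ∀ i, V i t / q i ≤ Real.exp (-ε * t) * c := by
  suffices h : ∀ δ > 0, ∀ t, 0 ≤ t → ∀ i, V i t / q i ≤ δ + Real.exp (-ε * t) * c from
    fun t ht i ↦ le_of_forall_pos_le_add fun δ hδ ↦ add_comm δ _ ▸ h δ hδ t ht i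
  intro δ hδ t ht
  -- `δ > 0` makes the contact estimate `-ε B s` strictly smaller than `B' s`.
  set B : ℝ → ℝ := fun s ↦ δ + Real.exp (-ε * s) * c
  have hB : ∀ s, HasDerivAt B (Real.exp (-ε * s) * (-ε * 1) * c) s := fun s ↦
    (((hasDerivAt_id s).const_mul (-ε)).exp.mul_const c).const_add δ
  have hVq : ∀ i, ∀ s ∈ Icc 0 t, HasDerivAt (fun s ↦ V i s / q i) (V' i s / q i) s :=
    fun i s hs ↦ (hV i s hs.1).div_const (q i)
  refine forall_image_le_of_deriv_right_lt_deriv_boundary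
    (fun i s hs ↦ (hVq i s hs).continuousAt.continuousWithinAt)
    (fun i s hs ↦ (hVq i s (Ico_subset_Icc_self hs)).hasDerivWithinAt)
    (fun i ↦ ?_) (fun s _ ↦ (hB s).continuousAt.continuousWithinAt)
    (fun s _ ↦ (hB s).hasDerivWithinAt) (fun s hs hall i heq ↦ ?_) (right_mem_Icc.2 ht)
  · simp only [B, mul_zero, Real.exp_zero, one_mul]
    linarith [hV₀ i]
  · have hBs : 0 ≤ B s := by positivity
    have hcomp : ∑ j, H i j * V j s ≤ B s * (H *ᵥ q) i :=
      H.mulVec_apply_le_mul_mulVec_apply hH (fun j ↦ (div_le_iff₀ (hq j)).1 (hall j))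
        ((div_eq_iff (hq i).ne').1 heq)
    calc V' i s / q i ≤ B s * (H *ᵥ q) i / q i :=
          div_le_div_of_nonneg_right ((hV' i s hs.1).trans hcomp) (hq i).le
      _ ≤ B s * (-ε * q i) / q i :=
          div_le_div_of_nonneg_right (mul_le_mul_of_nonneg_left (hHq i) hBs) (hq i).le
      _ = -ε * B s := by field_simp [(hq i).ne']
      _ < Real.exp (-ε * s) * (-ε * 1) * c := by simp only [B]; nlinarith

theorem stmt_10_general (N : ℕ) (H : Matrix (Fin N) (Fin N) ℝ)
    (hMetzler : ∀ i j, i ≠ j → 0 ≤ H i j)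
    (q : Fin N → ℝ) (hq : ∀ i, 0 < q i)
    (ε : ℝ) (hε : 0 < ε) (hHq : ∀ i, (H.mulVec q) i ≤ -ε * q i)
    (V V' : Fin N → ℝ → ℝ)
    (hVderiv : ∀ i t, 0 ≤ t → HasDerivAt (V i) (V' i t) t)
    (hVnonneg : ∀ i t, 0 ≤ t → 0 ≤ V i t)
    (hVineq : ∀ i t, 0 ≤ t → V' i t ≤ ∑ j, H i j * V j t) :
    ∀ t, 0 ≤ t → (⨆ i, V i t / q i) ≤ Real.exp (-ε * t) * ⨆ i, V i 0 / q i := by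
  have hW₀ : 0 ≤ ⨆ i, V i 0 / q i :=
    Real.iSup_nonneg fun i ↦ div_nonneg (hVnonneg i 0 le_rfl) (hq i).le
  intro t ht
  refine Real.iSup_le (fun i ↦ ?_) (mul_nonneg (Real.exp_pos _).le hW₀)
  exact div_le_exp_mul_of_metzler_comparison hMetzler hq hε hHq hVderiv hVineq hW₀
    (fun i ↦ le_ciSup (f := fun i ↦ V i 0 / q i) (Set.finite_range _).bddAbove i) t ht i

theorem stmt_10 (N : ℕ) (hN : 0 < N) (H : Matrix (Fin N) (Fin N) ℝ)
    (hMetzler : ∀ i j, i ≠ j → 0 ≤ H i j)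
    (hHurwitz : ∀ μ ∈ spectrum ℂ (H.map (algebraMap ℝ ℂ)), μ.re < 0)
    (q : Fin N → ℝ) (hq : ∀ i, 0 < q i)
    (ε : ℝ) (hε : 0 < ε) (hHq : ∀ i, (H.mulVec q) i ≤ -ε * q i)
    (V V' : Fin N → ℝ → ℝ)
    (hVderiv : ∀ i t, 0 ≤ t → HasDerivAt (V i) (V' i t) t)
    (hVnonneg : ∀ i t, 0 ≤ t → 0 ≤ V i t)
    (hVineq : ∀ i t, 0 ≤ t → V' i t ≤ ∑ j, H i j * V j t) :
    ∀ t, 0 ≤ t → (⨆ i, V i t / q i) ≤ Real.exp (-ε * t) * ⨆ i, V i 0 / q i :=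
  stmt_10_general N H hMetzler q hq ε hε hHq V V' hVderiv hVnonneg hVineq
end

section
/- Let N : ℝ≥0 → ℝ^{n×n} be continuous and suppose there exist α, β, λ > 0 and a differentiable diagonal matrix function M(t) with αI ⪯ M(t) ⪯ βI and M'(t) + N(t)ᵀM(t) + M(t)N(t) ⪯ -2λM(t) for all t. If x : ℝ≥0 → ℝⁿ is a solution of the (possibly nonlinear, factored) system ẋ(t) = N(t)x(t), then |x(t)| ≤ √(β/α) e^{-λt}|x(0)|. -/
/-!
Along the given trajectory `x`, the weighted energy `V t = x(t)ᵀ M(t) x(t)` is a Lyapunov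
function: since `ẋ = N(t) x`, its derivative is `xᵀ (M' + NᵀM + MN) x ≤ -2λ V`, so
`V t ≤ e^{-2λt} V 0`. Sandwiching `α |x|² ≤ V ≤ β |x|²` and taking square roots gives the bound.
Nothing about how `N(t)` arises from `x` matters: `x` solves the linear virtual system.
-/

open Matrix

/-- Loewner order `X ⪯ Y` for real matrices. -/
def Loewner {n : ℕ} (X Y : Matrix (Fin n) (Fin n) ℝ) : Prop :=
  (Y - X).PosSemidef

/-- Euclidean norm of a vector in `Fin n → ℝ`. -/
noncomputable def vecEnorm {n : ℕ} (v : Fin n → ℝ) : ℝ :=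
  Real.sqrt (∑ i, (v i) ^ 2)

theorem le_mul_exp_of_hasDerivAt_le_mul {V V' : ℝ → ℝ} {c : ℝ}
    (hV : ∀ t, 0 ≤ t → HasDerivAt V (V' t) t) (hV' : ∀ t, 0 ≤ t → V' t ≤ c * V t)
    {t : ℝ} (ht : 0 ≤ t) : V t ≤ V 0 * Real.exp (c * t) := by
  set W : ℝ → ℝ := fun s => V s * Real.exp (-(c * s))
  have hW : ∀ s, 0 ≤ s → HasDerivAt W ((V' s - c * V s) * Real.exp (-(c * s))) s := by
    intro s hs
    refine ((hV s hs).fun_mul (((hasDerivAt_id' s).const_mul c).fun_neg.exp)).congr_deriv ?_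
    ring
  have hanti : AntitoneOn W (Set.Ici 0) := by
    refine antitoneOn_of_hasDerivWithinAt_nonpos (convex_Ici 0)
      (fun s hs => (hW s hs).continuousAt.continuousWithinAt)
      (fun s hs => (hW s (interior_subset hs)).hasDerivWithinAt) fun s hs => ?_
    exact mul_nonpos_of_nonpos_of_nonneg (sub_nonpos.2 (hV' s (interior_subset hs)))
      (Real.exp_pos _).le
  have := hanti Set.self_mem_Ici ht ht
  simp only [W, mul_zero, neg_zero, Real.exp_zero, mul_one] at this
  calc V t = W t * Real.exp (c * t) := by simp [W, mul_assoc, ← Real.exp_add]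
    _ ≤ V 0 * Real.exp (c * t) := mul_le_mul_of_nonneg_right this (Real.exp_pos _).le

section

variable {n : ℕ}

theorem Loewner.dotProduct_mulVec_le {A B : Matrix (Fin n) (Fin n) ℝ}
    (h : Loewner A B) (x : Fin n → ℝ) : x ⬝ᵥ A *ᵥ x ≤ x ⬝ᵥ B *ᵥ x := by
  have := h.dotProduct_mulVec_nonneg x
  simp only [star_trivial, sub_mulVec, dotProduct_sub] at this
  linarith

theorem hasDerivAt_dotProduct_mulVec {P : ℝ → Matrix (Fin n) (Fin n) ℝ}
    {P' : Matrix (Fin n) (Fin n) ℝ} {x : ℝ → Fin n → ℝ} {v : Fin n → ℝ} {t : ℝ}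
    (hP : ∀ i j, HasDerivAt (fun s => P s i j) (P' i j) t)
    (hx : ∀ i, HasDerivAt (fun s => x s i) (v i) t) :
    HasDerivAt (fun s => x s ⬝ᵥ P s *ᵥ x s)
      (v ⬝ᵥ P t *ᵥ x t + x t ⬝ᵥ P' *ᵥ x t + x t ⬝ᵥ P t *ᵥ v) t := by
  refine (HasDerivAt.fun_sum fun i (_ : i ∈ Finset.univ) => (hx i).fun_mul
    (HasDerivAt.fun_sum fun j (_ : j ∈ Finset.univ) => (hP i j).fun_mul (hx j))).congr_deriv ?_
  simp only [dotProduct, mulVec, ← Finset.sum_add_distrib, Finset.mul_sum]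
  exact Finset.sum_congr rfl fun i _ => Finset.sum_congr rfl fun j _ => by ring

theorem hasDerivAt_dotProduct_mulVec_of_linearODE {P : ℝ → Matrix (Fin n) (Fin n) ℝ}
    {P' A : Matrix (Fin n) (Fin n) ℝ} {x : ℝ → Fin n → ℝ} {t : ℝ}
    (hP : ∀ i j, HasDerivAt (fun s => P s i j) (P' i j) t)
    (hx : ∀ i, HasDerivAt (fun s => x s i) ((A *ᵥ x t) i) t) :
    HasDerivAt (fun s => x s ⬝ᵥ P s *ᵥ x s) (x t ⬝ᵥ (P' + Aᵀ * P t + P t * A) *ᵥ x t) t := by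
  convert hasDerivAt_dotProduct_mulVec hP hx using 1
  have hAt : x t ⬝ᵥ Aᵀ *ᵥ (P t *ᵥ x t) = A *ᵥ x t ⬝ᵥ P t *ᵥ x t := by
    rw [dotProduct_mulVec, vecMul_transpose]
  rw [add_mulVec, add_mulVec, dotProduct_add, dotProduct_add, ← mulVec_mulVec,
    ← mulVec_mulVec, hAt]
  ring

theorem hasDerivAt_diagonal_apply {m : ℝ → Fin n → ℝ} {m' : Fin n → ℝ} {t : ℝ}
    (hm : ∀ i, HasDerivAt (fun s => m s i) (m' i) t) (i j : Fin n) :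
    HasDerivAt (fun s => diagonal (m s) i j) (diagonal m' i j) t := by
  by_cases hij : i = j
  · subst hij; simpa using hm i
  · simpa [hij] using hasDerivAt_const t (0 : ℝ)

theorem dotProduct_smul_one_mulVec (c : ℝ) (x : Fin n → ℝ) :
    x ⬝ᵥ (c • (1 : Matrix (Fin n) (Fin n) ℝ)) *ᵥ x = c * ∑ i, x i ^ 2 := by
  simp [smul_mulVec, dotProduct, sq, Finset.mul_sum, mul_left_comm]

theorem vecEnorm_le_of_mul_sum_sq_le {x y : Fin n → ℝ} {α β c : ℝ} (hα : 0 < α)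
    (hc : 0 ≤ c) (h : α * ∑ i, x i ^ 2 ≤ β * c ^ 2 * ∑ i, y i ^ 2) :
    vecEnorm x ≤ Real.sqrt (β / α) * c * vecEnorm y := by
  have hy : 0 ≤ ∑ i, y i ^ 2 := Finset.sum_nonneg fun i _ => sq_nonneg _
  have : ∑ i, x i ^ 2 ≤ β / α * c ^ 2 * ∑ i, y i ^ 2 := by
    rw [div_mul_eq_mul_div, div_mul_eq_mul_div, le_div_iff₀ hα]; linarith
  calc vecEnorm x ≤ Real.sqrt (β / α * c ^ 2 * ∑ i, y i ^ 2) := Real.sqrt_le_sqrt this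
    _ = Real.sqrt (β / α) * c * vecEnorm y := by
      rw [vecEnorm, Real.sqrt_mul' _ hy, Real.sqrt_mul' _ (sq_nonneg c), Real.sqrt_sq hc]

end

theorem stmt_13_general (n : ℕ) (N : ℝ → Matrix (Fin n) (Fin n) ℝ)
    (α β lam : ℝ) (hα : 0 < α)
    (m m' : ℝ → Fin n → ℝ)
    (hderiv : ∀ t i, HasDerivAt (fun s => m s i) (m' t i) t)
    (hlow : ∀ t, 0 ≤ t →
      Loewner (α • (1 : Matrix (Fin n) (Fin n) ℝ)) (Matrix.diagonal (m t)))
    (hup : ∀ t, 0 ≤ t →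
      Loewner (Matrix.diagonal (m t)) (β • (1 : Matrix (Fin n) (Fin n) ℝ)))
    (hineq : ∀ t, 0 ≤ t →
      Loewner (Matrix.diagonal (m' t) + (N t)ᵀ * Matrix.diagonal (m t) +
          Matrix.diagonal (m t) * N t)
        ((-(2 * lam)) • Matrix.diagonal (m t)))
    (x : ℝ → Fin n → ℝ)
    (hx : ∀ t, 0 ≤ t → ∀ i, HasDerivAt (fun s => x s i) ((N t).mulVec (x t) i) t) :
    ∀ t, 0 ≤ t →
      vecEnorm (x t) ≤ Real.sqrt (β / α) * Real.exp (-lam * t) * vecEnorm (x 0) := by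
  intro t ht
  set V : ℝ → ℝ := fun s => x s ⬝ᵥ diagonal (m s) *ᵥ x s
  have hV : ∀ s, 0 ≤ s → HasDerivAt V
      (x s ⬝ᵥ (diagonal (m' s) + (N s)ᵀ * diagonal (m s) + diagonal (m s) * N s) *ᵥ x s) s :=
    fun s hs => hasDerivAt_dotProduct_mulVec_of_linearODE
      (hasDerivAt_diagonal_apply (hderiv s)) (hx s hs)
  have hdecay : V t ≤ V 0 * Real.exp (-(2 * lam) * t) := by
    refine le_mul_exp_of_hasDerivAt_le_mul hV (fun s hs => ?_) ht
    simpa only [smul_mulVec, dotProduct_smul, smul_eq_mul] using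
      (hineq s hs).dotProduct_mulVec_le (x s)
  have hlow_t := (hlow t ht).dotProduct_mulVec_le (x t)
  have hup_0 := (hup 0 le_rfl).dotProduct_mulVec_le (x 0)
  rw [dotProduct_smul_one_mulVec] at hlow_t hup_0
  refine vecEnorm_le_of_mul_sum_sq_le hα (Real.exp_pos _).le ?_
  calc α * ∑ i, x t i ^ 2 ≤ V 0 * Real.exp (-(2 * lam) * t) := hlow_t.trans hdecay
    _ ≤ β * (∑ i, x 0 i ^ 2) * Real.exp (-(2 * lam) * t) :=
      mul_le_mul_of_nonneg_right hup_0 (Real.exp_pos _).le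
    _ = β * Real.exp (-lam * t) ^ 2 * ∑ i, x 0 i ^ 2 := by
      rw [← Real.exp_nat_mul]; ring_nf

theorem stmt_13 (n : ℕ) (N : ℝ → Matrix (Fin n) (Fin n) ℝ)
    (hNcont : ∀ i j, Continuous (fun t => N t i j))
    (α β lam : ℝ) (hα : 0 < α) (hβ : 0 < β) (hlam : 0 < lam)
    (m m' : ℝ → Fin n → ℝ)
    (hderiv : ∀ t i, HasDerivAt (fun s => m s i) (m' t i) t)
    (hlow : ∀ t, 0 ≤ t →
      Loewner (α • (1 : Matrix (Fin n) (Fin n) ℝ)) (Matrix.diagonal (m t)))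
    (hup : ∀ t, 0 ≤ t →
      Loewner (Matrix.diagonal (m t)) (β • (1 : Matrix (Fin n) (Fin n) ℝ)))
    (hineq : ∀ t, 0 ≤ t →
      Loewner (Matrix.diagonal (m' t) + (N t)ᵀ * Matrix.diagonal (m t) +
          Matrix.diagonal (m t) * N t)
        ((-(2 * lam)) • Matrix.diagonal (m t)))
    (x : ℝ → Fin n → ℝ)
    (hx : ∀ t, 0 ≤ t → ∀ i, HasDerivAt (fun s => x s i) ((N t).mulVec (x t) i) t) :
    ∀ t, 0 ≤ t →
      vecEnorm (x t) ≤ Real.sqrt (β / α) * Real.exp (-lam * t) * vecEnorm (x 0) :=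
  stmt_13_general n N α β lam hα m m' hderiv hlow hup hineq x hx
end

section
/- Let A, H ∈ ℝ^{n×n} with H entrywise nonnegative, and ψ ≥ 0. Suppose M is a positive definite diagonal matrix such that the block matrix [[AᵀM + MA + ψ²HᵀH, M], [M, -I]] is negative definite. Then for every matrix Δ ∈ ℝ^{n×n} with ΔᵀΔ ⪯ ψ²HᵀH, one has (A+Δ)ᵀM + M(A+Δ) ≺ 0. -/
open Matrix

theorem stmt_14 (n : ℕ) (A H : Matrix (Fin n) (Fin n) ℝ)
    (hH : ∀ i j, 0 ≤ H i j) (ψ : ℝ) (hψ : 0 ≤ ψ)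
    (d : Fin n → ℝ) (hd : ∀ i, 0 < d i)
    (M : Matrix (Fin n) (Fin n) ℝ) (hM : M = Matrix.diagonal d)
    (hblock : (-(Matrix.fromBlocks
        (Aᵀ * M + M * A + (ψ ^ 2) • (Hᵀ * H)) M M
        (-(1 : Matrix (Fin n) (Fin n) ℝ)))).PosDef) :
    ∀ Δ : Matrix (Fin n) (Fin n) ℝ,
      Loewner (Δᵀ * Δ) ((ψ ^ 2) • (Hᵀ * H)) →
      (-((A + Δ)ᵀ * M + M * (A + Δ))).PosDef := by
  intro Δ hΔ
  have hMsym : Mᵀ = M := by rw [hM]; exact Matrix.diagonal_transpose d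
  have hCT : ∀ X : Matrix (Fin n) (Fin n) ℝ, Xᴴ = Xᵀ := fun X => by
    ext i j; simp [Matrix.conjTranspose_apply]
  have key : ∀ (B C : Matrix (Fin n) (Fin n) ℝ) (v : Fin n → ℝ),
      v ⬝ᵥ ((Bᵀ * C) *ᵥ v) = (B *ᵥ v) ⬝ᵥ (C *ᵥ v) := by
    intro B C v
    rw [← Matrix.mulVec_mulVec, Matrix.dotProduct_mulVec, Matrix.vecMul_transpose]
  have sq : ∀ v : Fin n → ℝ, 0 ≤ v ⬝ᵥ v := fun v =>
    Finset.sum_nonneg fun i _ => mul_self_nonneg (v i)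
  rw [Matrix.posDef_iff_dotProduct_mulVec]
  constructor
  · rw [Matrix.IsHermitian, hCT]
    simp only [Matrix.transpose_neg, Matrix.transpose_add, Matrix.transpose_mul,
      Matrix.transpose_transpose, hMsym]
    rw [add_comm]
  · intro x hx
    set y : Fin n → ℝ := M *ᵥ x with hy
    have hz : (Sum.elim x y : Fin n ⊕ Fin n → ℝ) ≠ 0 := by
      intro h
      apply hx
      funext i
      have := congrFun h (Sum.inl i)
      simpa using this
    have hb := (Matrix.posDef_iff_dotProduct_mulVec.mp hblock).2 hz
    have hquad : (star (Sum.elim x y)) ⬝ᵥ ((-(Matrix.fromBlocks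
        (Aᵀ * M + M * A + (ψ ^ 2) • (Hᵀ * H)) M M
        (-(1 : Matrix (Fin n) (Fin n) ℝ)))) *ᵥ (Sum.elim x y))
        = -(x ⬝ᵥ ((Aᵀ * M + M * A + (ψ ^ 2) • (Hᵀ * H)) *ᵥ x)
            + x ⬝ᵥ (M *ᵥ y) + y ⬝ᵥ (M *ᵥ x) - y ⬝ᵥ y) := by
      rw [Matrix.neg_mulVec, dotProduct_neg, Matrix.fromBlocks_mulVec]
      simp only [star_trivial]
      simp only [Sum.elim_comp_inl, Sum.elim_comp_inr]
      rw [sumElim_dotProduct_sumElim, dotProduct_add, dotProduct_add,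
        Matrix.neg_mulVec, Matrix.one_mulVec, dotProduct_neg]
      ring
    rw [hquad] at hb
    have hxMy : x ⬝ᵥ (M *ᵥ y) = y ⬝ᵥ (M *ᵥ x) := by
      rw [Matrix.dotProduct_mulVec, ← Matrix.vecMul_transpose, hMsym, dotProduct_comm]
    have hΔx : (Δ *ᵥ x) ⬝ᵥ (Δ *ᵥ x) ≤ (ψ^2) * (x ⬝ᵥ ((Hᵀ * H) *ᵥ x)) := by
      have h2 := (Matrix.posSemidef_iff_dotProduct_mulVec.mp hΔ).2 x
      rw [Matrix.sub_mulVec, dotProduct_sub, Matrix.smul_mulVec] at h2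
      simp only [star_trivial, dotProduct_smul, smul_eq_mul] at h2
      rw [key Δ Δ x] at h2
      linarith
    have hcs : y ⬝ᵥ (Δ *ᵥ x) + (Δ *ᵥ x) ⬝ᵥ y ≤ y ⬝ᵥ y + (Δ *ᵥ x) ⬝ᵥ (Δ *ᵥ x) := by
      have h0 := sq (y - Δ *ᵥ x)
      rw [dotProduct_sub, sub_dotProduct, sub_dotProduct] at h0
      linarith
    have hgoal : (star x) ⬝ᵥ ((-((A + Δ)ᵀ * M + M * (A + Δ))) *ᵥ x)
        = -(x ⬝ᵥ ((Aᵀ * M + M * A) *ᵥ x) + (Δ *ᵥ x) ⬝ᵥ y + y ⬝ᵥ (Δ *ᵥ x)) := by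
      simp only [star_trivial, Matrix.neg_mulVec, dotProduct_neg, neg_inj]
      rw [Matrix.transpose_add, Matrix.add_mul, Matrix.mul_add]
      simp only [Matrix.add_mulVec, dotProduct_add]
      rw [key Δ M x, show M * Δ = Mᵀ * Δ by rw [hMsym], key M Δ x, ← hy]
      ring
    rw [hgoal]
    have hB : x ⬝ᵥ ((Aᵀ * M + M * A + (ψ ^ 2) • (Hᵀ * H)) *ᵥ x)
        = x ⬝ᵥ ((Aᵀ * M + M * A) *ᵥ x) + (ψ^2) * (x ⬝ᵥ ((Hᵀ * H) *ᵥ x)) := by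
      rw [Matrix.add_mulVec, dotProduct_add, Matrix.smul_mulVec,
        dotProduct_smul, smul_eq_mul]
    rw [hB, hxMy] at hb
    linarith
end
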